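/- arXiv:1008.5252 — 6 statements merged into one kernel-verified Lean document; each statement's English description precedes it below -/
import Mathlib

section
/- Let A be a Banach algebra with a right identity element, φ a nonzero continuous multiplicative linear functional on A, and suppose there exists m ∈ A with φ(m) = 1 and a·m = φ(a)·m for all a ∈ A. Then ker φ has a right identity element. -/
open Filter Topology

/-- If `A` has a right identity and there is `m` with `φ m = 1` and
`a * m = φ a • m` for all `a`, then `ker φ` has a right identity. -/
theorem kerphi_has_right_identity
    {A : Type*} [NonUnitalNormedRing A] [NormedSpace ℂ A]
    [IsScalarTower ℂ A A] [SMulCommClass ℂ A A] [CompleteSpace A]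
    (φ : A →L[ℂ] ℂ) (hφmul : ∀ a b, φ (a * b) = φ a * φ b) (hφ : φ ≠ 0)
    (n : A) (hn : ∀ a : A, a * n = a)
    (m : A) (hm1 : φ m = 1) (hm : ∀ a : A, a * m = φ a • m) :
    ∃ e : A, φ e = 0 ∧ ∀ b : A, φ b = 0 → b * e = b := by
  have hφn : φ n = 1 := by
    have := hφmul m n
    rw [hn m, hm1, one_mul] at this
    exact this.symm
  refine ⟨n - m, by simp [hφn, hm1], fun b hb => ?_⟩
  rw [mul_sub, hn, hm, hb, zero_smul, sub_zero]
end

section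
/- Let A be a Banach algebra, φ a nonzero continuous character on A. If every continuous derivation from A into every Banach (A,φ)-bimodule is inner, then there exists m ∈ A with φ(m) = 1 and a·m = φ(a)·m for all a ∈ A. -/
open Filter Topology

/-- If every continuous derivation from `A` into every Banach `(A,φ)`-bimodule
(right action `x · a = φ a • x`) is inner, then there is `m ∈ A` with `φ m = 1`
and `a * m = φ a • m` for all `a`. -/
theorem phi_invariant_element_of_phi_contractible
    {A : Type u} [NonUnitalNormedRing A] [NormedSpace ℂ A]
    [IsScalarTower ℂ A A] [SMulCommClass ℂ A A] [CompleteSpace A]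
    (φ : A →L[ℂ] ℂ) (hφmul : ∀ a b, φ (a * b) = φ a * φ b) (hφ : φ ≠ 0)
    (h : ∀ (X : Type u) [NormedAddCommGroup X] [NormedSpace ℂ X] [CompleteSpace X]
      (l : A →L[ℂ] X →L[ℂ] X), (∀ (a b : A) (x : X), l (a * b) x = l a (l b x)) →
      ∀ D : A →L[ℂ] X, (∀ a b : A, D (a * b) = l a (D b) + φ b • D a) →
        ∃ ξ : X, ∀ a : A, D a = l a ξ - φ a • ξ) :
    ∃ m : A, φ m = 1 ∧ ∀ a : A, a * m = φ a • m := by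
  -- u with φ u = 1
  obtain ⟨v, hv⟩ : ∃ v, φ v ≠ 0 := by
    by_contra hc; push_neg at hc
    exact hφ (ContinuousLinearMap.ext fun a => by simpa using hc a)
  obtain ⟨u, hφu⟩ : ∃ u : A, φ u = 1 :=
    ⟨(φ v)⁻¹ • v, by rw [map_smul, smul_eq_mul, inv_mul_cancel₀ hv]⟩
  -- the kernel of φ as a Banach space
  set K : Submodule ℂ A := LinearMap.ker (φ : A →ₗ[ℂ] ℂ) with hK
  haveI : CompleteSpace K := (ContinuousLinearMap.isClosed_ker φ).completeSpace_coe
  have memK : ∀ x : A, x ∈ K ↔ φ x = 0 := fun x => LinearMap.mem_ker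
  -- left action of A on K
  have hmul_mem : ∀ (a : A) (x : K), a * (x : A) ∈ K := fun a x => by
    rw [memK, hφmul, (memK x).1 x.2, mul_zero]
  let l₀ : A → (K →L[ℂ] K) := fun a =>
    (((ContinuousLinearMap.mul ℂ A) a).comp K.subtypeL).codRestrict K (hmul_mem a)
  have l₀_apply : ∀ (a : A) (x : K), ((l₀ a x : K) : A) = a * (x : A) := fun a x => rfl
  have l₀_norm : ∀ a, ‖l₀ a‖ ≤ ‖a‖ := by
    intro a
    refine ContinuousLinearMap.opNorm_le_bound _ (norm_nonneg a) (fun x => ?_)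
    show ‖a * (x : A)‖ ≤ ‖a‖ * ‖x‖
    exact norm_mul_le _ _
  let l : A →L[ℂ] K →L[ℂ] K :=
    LinearMap.mkContinuous
      { toFun := l₀
        map_add' := fun a b => by
          ext x; show ((a + b) * (x : A)) = a * x + b * x; rw [add_mul]
        map_smul' := fun c a => by
          ext x; show ((c • a) * (x : A)) = c • (a * x); rw [smul_mul_assoc] }
      1 (fun a => by simpa using l₀_norm a)
  have l_apply : ∀ (a : A) (x : K), ((l a x : K) : A) = a * (x : A) := fun a x => rfl
  have hl : ∀ (a b : A) (x : K), l (a * b) x = l a (l b x) := by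
    intro a b x
    apply Subtype.ext
    show (a * b) * (x : A) = a * (b * (x : A))
    rw [mul_assoc]
  -- the derivation D a = a u - φ a • u
  have hDmem : ∀ a : A, ((ContinuousLinearMap.mul ℂ A).flip u - φ.smulRight u) a ∈ K := by
    intro a
    rw [memK]
    show φ (a * u - φ a • u) = 0
    rw [map_sub, hφmul, map_smul, hφu, mul_one, smul_eq_mul, mul_one, sub_self]
  let D : A →L[ℂ] K :=
    ((ContinuousLinearMap.mul ℂ A).flip u - φ.smulRight u).codRestrict K hDmem
  have D_apply : ∀ a : A, ((D a : K) : A) = a * u - φ a • u := fun a => rfl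
  have hD : ∀ a b : A, D (a * b) = l a (D b) + φ b • D a := by
    intro a b
    apply Subtype.ext
    show (a * b) * u - φ (a * b) • u = a * (b * u - φ b • u) + φ b • (a * u - φ a • u)
    rw [hφmul, mul_sub, smul_sub, mul_smul_comm, mul_smul, mul_assoc,
      smul_comm (φ a) (φ b)]
    abel
  obtain ⟨ξ, hξ⟩ := h K l hl D hD
  refine ⟨u - ξ, ?_, ?_⟩
  · rw [map_sub, hφu, (memK ξ).1 ξ.2, sub_zero]
  · intro a
    have := congrArg (Subtype.val) (hξ a)
    have h2 : a * u - φ a • u = a * (ξ : A) - φ a • (ξ : A) := this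
    rw [mul_sub, smul_sub]
    exact sub_eq_sub_iff_sub_eq_sub.mp h2
end

section
/- Let A be a Banach algebra, φ a nonzero continuous character, and suppose the ideal ker φ has a right approximate identity, i.e., a net (b_α) in ker φ with ‖b b_α − b‖ → 0 for all b ∈ ker φ. Then there exists a net (m_α) in A with φ(m_α) = 1 for all α and ‖a m_α − φ(a) m_α‖ → 0 for every a ∈ A. -/
open Filter Topology

/-- If `ker φ` has a right approximate identity, then there is a net `(m α)` in `A`
with `φ (m α) = 1` and `‖a * m α - φ a • m α‖ → 0` for all `a ∈ A`. -/
theorem approx_phi_mean_of_kerphi_rai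
    {A : Type*} [NonUnitalNormedRing A] [NormedSpace ℂ A]
    [IsScalarTower ℂ A A] [SMulCommClass ℂ A A] [CompleteSpace A]
    (φ : A →L[ℂ] ℂ) (hφmul : ∀ a b, φ (a * b) = φ a * φ b) (hφ : φ ≠ 0)
    {ι : Type*} [SemilatticeSup ι] [Nonempty ι]
    (b : ι → A) (hbker : ∀ α, φ (b α) = 0)
    (hb : ∀ c : A, φ c = 0 → Tendsto (fun α => ‖c * b α - c‖) atTop (𝓝 0)) :
    ∃ m : ι → A, (∀ α, φ (m α) = 1) ∧
      ∀ a : A, Tendsto (fun α => ‖a * m α - φ a • m α‖) atTop (𝓝 0) := by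
  -- choose u with φ u = 1
  obtain ⟨x, hx⟩ : ∃ x, φ x ≠ 0 := by
    by_contra h
    push_neg at h
    exact hφ (ContinuousLinearMap.ext fun y => by simp [h y])
  set u : A := (φ x)⁻¹ • x with hu
  have hφu : φ u = 1 := by simp [hu, inv_mul_cancel₀ hx]
  refine ⟨fun α => u - u * b α, fun α => by simp [hφu, hφmul, hbker], fun a => ?_⟩
  set c : A := a - φ a • u with hc
  set d : A := u * u - u with hd
  have hφc : φ c = 0 := by simp [hc, hφu]
  have hφd : φ d = 0 := by simp [hd, hφmul, hφu]
  have hφcu : φ (c * u) = 0 := by rw [hφmul, hφc, zero_mul]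
  have key : ∀ α, a * (u - u * b α) - φ a • (u - u * b α)
      = -((c * u) * b α - c * u) - φ a • (d * b α - d) := by
    intro α
    simp only [hc, hd, sub_mul, mul_sub, smul_sub, smul_mul_assoc, mul_assoc]
    abel
  have hle : ∀ α, ‖a * (u - u * b α) - φ a • (u - u * b α)‖
      ≤ ‖(c * u) * b α - c * u‖ + ‖φ a‖ * ‖d * b α - d‖ := by
    intro α
    rw [key α]
    calc ‖-((c * u) * b α - c * u) - φ a • (d * b α - d)‖
        ≤ ‖-((c * u) * b α - c * u)‖ + ‖φ a • (d * b α - d)‖ := norm_sub_le _ _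
      _ = ‖(c * u) * b α - c * u‖ + ‖φ a‖ * ‖d * b α - d‖ := by
          rw [norm_neg, norm_smul]
  have hlim : Tendsto (fun α => ‖(c * u) * b α - c * u‖ + ‖φ a‖ * ‖d * b α - d‖)
      atTop (𝓝 0) := by
    have := (hb (c * u) hφcu).add ((hb d hφd).const_mul ‖φ a‖)
    simpa using this
  exact squeeze_zero (fun α => norm_nonneg _) hle hlim
end

section
/- Let A be a Banach algebra, φ a nonzero continuous character on A, and suppose there is a net (m_α) in A with φ(m_α) → 1 and ‖a m_α − φ(a) m_α‖ → 0 for all a ∈ A. Then for every Banach (φ,A)-bimodule E (left action a·x = φ(a)x), every continuous derivation D : A → E* is approximately inner: there is a net (f_α) in E* with ‖D(a) − (a·f_α − f_α·a)‖ → 0 for each a ∈ A. -/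
open Filter Topology

/-- If there is a net `(m α)` in `A` with `φ (m α) → 1` and
`‖a * m α - φ a • m α‖ → 0` for all `a`, then every continuous derivation from `A`
into the dual of a `(φ, A)`-bimodule `E` (left action `a • x = φ a • x`, right
action `ρ`) is approximately inner. -/
theorem derivation_into_dual_approximately_inner
    {A : Type*} [NonUnitalNormedRing A] [NormedSpace ℂ A]
    [IsScalarTower ℂ A A] [SMulCommClass ℂ A A] [CompleteSpace A]
    (φ : A →L[ℂ] ℂ) (hφmul : ∀ a b, φ (a * b) = φ a * φ b) (hφ : φ ≠ 0)
    {ι : Type*} [SemilatticeSup ι] [Nonempty ι]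
    (m : ι → A) (hm1 : Tendsto (fun α => φ (m α)) atTop (𝓝 1))
    (hm2 : ∀ a : A, Tendsto (fun α => ‖a * m α - φ a • m α‖) atTop (𝓝 0))
    (E : Type*) [NormedAddCommGroup E] [NormedSpace ℂ E] [CompleteSpace E]
    (ρ : E →L[ℂ] A →L[ℂ] E)
    (hρ : ∀ (x : E) (a b : A), ρ (ρ x a) b = ρ x (a * b))
    (D : A →L[ℂ] E →L[ℂ] ℂ)
    (hD : ∀ a b : A, D (a * b) = (D b).comp (ρ.flip a) + φ b • D a) :
    ∃ f : ι → (E →L[ℂ] ℂ), ∀ a : A,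
      Tendsto (fun α => ‖D a - ((f α).comp (ρ.flip a) - φ a • f α)‖) atTop (𝓝 0) := by
  refine ⟨fun α => -D (m α), fun a => ?_⟩
  have key : ∀ α, D a - ((-D (m α)).comp (ρ.flip a) - φ a • (-D (m α)))
      = (1 - φ (m α)) • D a + D (a * m α - φ a • m α) := by
    intro α
    have h : D (a * m α - φ a • m α)
        = (D (m α)).comp (ρ.flip a) + φ (m α) • D a - φ a • D (m α) := by
      rw [map_sub, map_smul, hD a (m α)]
    rw [h, ContinuousLinearMap.neg_comp]
    ext x
    simp only [ContinuousLinearMap.add_apply, ContinuousLinearMap.sub_apply,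
      ContinuousLinearMap.smul_apply, ContinuousLinearMap.neg_apply,
      ContinuousLinearMap.comp_apply, smul_eq_mul]
    ring
  have hbound : ∀ α, ‖D a - ((-D (m α)).comp (ρ.flip a) - φ a • (-D (m α)))‖
      ≤ ‖1 - φ (m α)‖ * ‖D a‖ + ‖D‖ * ‖a * m α - φ a • m α‖ := by
    intro α
    rw [key α]
    refine (norm_add_le _ _).trans (add_le_add ?_ ?_)
    · exact (norm_smul (1 - φ (m α)) (D a)).le
    · exact D.le_opNorm _
  refine squeeze_zero (fun α => norm_nonneg _) hbound ?_
  have h1 : Tendsto (fun α => ‖1 - φ (m α)‖ * ‖D a‖) atTop (𝓝 0) := by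
    have h0 : Tendsto (fun α => (1 : ℂ) - φ (m α)) atTop (𝓝 0) := by
      simpa using hm1.const_sub (1 : ℂ)
    simpa using h0.norm.mul_const ‖D a‖
  have h2 : Tendsto (fun α => ‖D‖ * ‖a * m α - φ a • m α‖) atTop (𝓝 0) := by
    simpa using (hm2 a).const_mul ‖D‖
  simpa using h1.add h2
end

section
/- Let A be a commutative Banach algebra such that for every φ in the maximal ideal space of A (the set of nonzero continuous characters) together with φ = 0, the ideal ker φ (with ker 0 := A) has an identity element. Then the maximal ideal space of A is finite, A is semisimple, and A is isomorphic as an algebra to ℂⁿ for some n. -/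
open Filter Topology WeakDual


theorem aux_unital {B : Type*} [NormedCommRing B] [NormedAlgebra ℂ B] [CompleteSpace B]
    (h : ∀ φ : B →L[ℂ] ℂ, (∀ a b, φ (a * b) = φ a * φ b) → φ ≠ 0 →
      ∃ E : B, φ E = 0 ∧ ∀ c : B, φ c = 0 → E * c = c) :
    {φ : B →L[ℂ] ℂ | (∀ a b, φ (a * b) = φ a * φ b) ∧ φ ≠ 0}.Finite ∧
    (∀ a : B, (∀ φ : B →L[ℂ] ℂ, (∀ x y, φ (x * y) = φ x * φ y) → φ ≠ 0 → φ a = 0)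
      → a = 0) ∧
    ∃ (n : ℕ) (f : B →ₙₐ[ℂ] (Fin n → ℂ)), Function.Bijective f := by
  classical
  set S : Set (B →L[ℂ] ℂ) := {φ | (∀ a b, φ (a * b) = φ a * φ b) ∧ φ ≠ 0} with hSdef
  choose E hE0 hE using h
  -- each character sends 1 to 1
  have hone : ∀ φ ∈ S, φ (1 : B) = 1 := by
    intro φ hφ
    obtain ⟨a, ha⟩ : ∃ a, φ a ≠ 0 := by
      by_contra hc
      push_neg at hc
      exact hφ.2 (ContinuousLinearMap.ext fun a => by simp [hc a])
    have h1a := hφ.1 1 a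
    rw [one_mul] at h1a
    exact mul_right_cancel₀ ha (by rw [← h1a, one_mul])
  -- the idempotents
  let e : (B →L[ℂ] ℂ) → B := fun φ =>
    if hφ : (∀ a b, φ (a * b) = φ a * φ b) ∧ φ ≠ 0 then 1 - E φ hφ.1 hφ.2 else 0
  have he1 : ∀ φ (hφ : φ ∈ S), φ (e φ) = 1 := by
    intro φ hφ
    have hedef : e φ = 1 - E φ hφ.1 hφ.2 := dif_pos hφ
    rw [hedef, map_sub, hE0 φ hφ.1 hφ.2, hone φ hφ, sub_zero]
  have hkey : ∀ φ (hφ : φ ∈ S) (a : B), e φ * a = φ a • e φ := by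
    intro φ hφ a
    have hmem : φ (a - φ a • 1) = 0 := by
      rw [map_sub, map_smul, smul_eq_mul, hone φ hφ, mul_one, sub_self]
    have hfix := hE φ hφ.1 hφ.2 _ hmem
    have hedef : e φ = 1 - E φ hφ.1 hφ.2 := dif_pos hφ
    rw [hedef]
    set Eφ := E φ hφ.1 hφ.2 with hEφ
    rw [hEφ] at hfix ⊢
    have h2 : Eφ * a = (a - φ a • 1) + φ a • Eφ := by
      have h3 : Eφ * (a - φ a • 1) + Eφ * (φ a • 1) = Eφ * a := by
        rw [← mul_add, sub_add_cancel]
      rw [← h3, hfix, mul_smul_comm, mul_one]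
    rw [sub_mul, one_mul, h2, smul_sub]
    abel
  have horth : ∀ φ ∈ S, ∀ ψ ∈ S, ψ ≠ φ → ψ (e φ) = 0 := by
    intro φ hφ ψ hψ hne
    by_contra h0
    refine hne (ContinuousLinearMap.ext fun a => ?_)
    have := congrArg ψ (hkey φ hφ a)
    rw [hψ.1, map_smul, smul_eq_mul] at this
    have h4 : ψ a * ψ (e φ) = φ a * ψ (e φ) := by rw [mul_comm (ψ a)]; exact this
    exact mul_right_cancel₀ h0 h4
  -- build characterSpace elements from members of S
  have toChar : ∀ φ : B →L[ℂ] ℂ, φ ∈ S → ∃ χ : characterSpace ℂ B, CharacterSpace.toCLM χ = φ := by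
    intro φ hφ
    refine ⟨⟨φ, ?_, fun x y => hφ.1 x y⟩, rfl⟩
    exact fun hz => hφ.2 hz
  have charS : ∀ χ : characterSpace ℂ B, CharacterSpace.toCLM χ ∈ S := by
    intro χ
    refine ⟨fun a b => map_mul χ a b, ?_⟩
    intro hz
    have : χ (1 : B) = 1 := map_one χ
    rw [show χ (1:B) = CharacterSpace.toCLM χ 1 from rfl, hz] at this
    simp at this
  -- discreteness
  haveI : DiscreteTopology (characterSpace ℂ B) := by
    rw [discreteTopology_iff_isOpen_singleton]
    intro χ
    have hχS := charS χ
    have hopen : IsOpen ((fun ψ : characterSpace ℂ B => ψ (e (CharacterSpace.toCLM χ))) ⁻¹'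
        (Metric.ball (1 : ℂ) 1)) := by
      refine (Metric.isOpen_ball).preimage ?_
      exact (WeakDual.eval_continuous _).comp continuous_subtype_val
    convert hopen using 1
    ext ψ
    simp only [Set.mem_singleton_iff, Set.mem_preimage, Metric.mem_ball]
    constructor
    · rintro rfl
      rw [show (ψ : B → ℂ) = ⇑(CharacterSpace.toCLM ψ) from rfl, he1 _ hχS]
      simpa using zero_lt_one
    · intro hd
      by_contra hne
      have hψφ : CharacterSpace.toCLM ψ ≠ CharacterSpace.toCLM χ := by
        intro hh
        exact hne (Subtype.ext (congrArg (fun f : B →L[ℂ] ℂ => (f : WeakDual ℂ B)) hh))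
      have := horth _ hχS _ (charS ψ) hψφ
      rw [show (ψ : B → ℂ) = ⇑(CharacterSpace.toCLM ψ) from rfl, this] at hd
      simp at hd
  have hfin : Finite (characterSpace ℂ B) := finite_of_compact_of_discrete
  have hSfin : S.Finite := by
    rw [← Set.finite_coe_iff]
    refine Finite.of_injective (fun φ => Classical.choose (toChar φ.1 φ.2)) ?_
    intro φ₁ φ₂ hh
    have hh' : Classical.choose (toChar φ₁.1 φ₁.2) = Classical.choose (toChar φ₂.1 φ₂.2) := hh
    have e1 := Classical.choose_spec (toChar φ₁.1 φ₁.2)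
    have e2 := Classical.choose_spec (toChar φ₂.1 φ₂.2)
    apply Subtype.ext
    rw [← e1, ← e2, hh']
  -- the complement idempotent
  set s : Finset (B →L[ℂ] ℂ) := hSfin.toFinset with hsdef
  have hmem_s : ∀ φ, φ ∈ s ↔ φ ∈ S := fun φ => hSfin.mem_toFinset
  set x : B := 1 - ∑ φ ∈ s, e φ with hxdef
  have hφx : ∀ φ ∈ S, φ x = 0 := by
    intro φ hφ
    have hsum : φ (∑ ψ ∈ s, e ψ) = 1 := by
      rw [map_sum, Finset.sum_eq_single φ]
      · exact he1 φ hφ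
      · intro ψ hψ hne
        exact horth ψ ((hmem_s ψ).1 hψ) φ hφ (fun hh => hne hh.symm)
      · intro hφs; exact absurd ((hmem_s φ).2 hφ) hφs
    rw [hxdef, map_sub, hone φ hφ, hsum, sub_self]
  have hx0 : x = 0 := by
    by_contra hx
    have hxe : ∀ φ ∈ s, x * e φ = 0 := by
      intro φ hφ
      have hφS := (hmem_s φ).1 hφ
      rw [mul_comm, hkey φ hφS, hφx φ hφS, zero_smul]
    have hxx : x * x = x := by
      nth_rewrite 2 [hxdef]
      rw [mul_sub, mul_one, Finset.mul_sum, Finset.sum_congr rfl hxe,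
        Finset.sum_const_zero, sub_zero]
    have hnu : ¬ IsUnit (1 - x) := by
      intro hunit
      obtain ⟨b, hb, -⟩ := isUnit_iff_exists.mp hunit
      apply hx
      have hz : x * (1 - x) = 0 := by rw [mul_sub, mul_one, hxx, sub_self]
      calc x = x * ((1 - x) * b) := by rw [hb, mul_one]
        _ = x * (1 - x) * b := by rw [mul_assoc]
        _ = 0 := by rw [hz, zero_mul]
    haveI : Nontrivial B := nontrivial_of_ne x 0 hx
    obtain ⟨f, hf⟩ := WeakDual.CharacterSpace.exists_apply_eq_zero hnu
    have hfS := charS f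
    have hzero : CharacterSpace.toCLM f x = 0 := hφx _ hfS
    rw [map_sub, map_one, sub_eq_zero] at hf
    rw [show CharacterSpace.toCLM f x = f x from rfl, ← hf] at hzero
    exact one_ne_zero hzero
  -- semisimplicity
  have hsemi : ∀ a : B, (∀ φ : B →L[ℂ] ℂ, (∀ x y, φ (x * y) = φ x * φ y) → φ ≠ 0 → φ a = 0)
      → a = 0 := by
    intro a ha
    have hone_eq : (1 : B) = ∑ φ ∈ s, e φ := by
      have h5 := hx0; rwa [hxdef, sub_eq_zero] at h5
    calc a = 1 * a := (one_mul a).symm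
      _ = ∑ φ ∈ s, e φ * a := by rw [hone_eq, Finset.sum_mul]
      _ = 0 := by
          refine Finset.sum_eq_zero fun φ hφ => ?_
          have hφS := (hmem_s φ).1 hφ
          rw [hkey φ hφS, ha φ hφS.1 hφS.2, zero_smul]
  refine ⟨hSfin, hsemi, s.card, ?_⟩
  -- the isomorphism with ℂ^n
  have hcard : Fintype.card ↥s = s.card := Fintype.card_coe s
  let g : Fin s.card ≃ ↥s := (Fintype.equivFinOfCardEq hcard).symm
  let ch : Fin s.card → (B →L[ℂ] ℂ) := fun i => (g i).1
  have hch : ∀ i, ch i ∈ S := fun i => (hmem_s _).1 (g i).2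
  let f : B →ₙₐ[ℂ] (Fin s.card → ℂ) :=
    { toFun := fun a i => ch i a
      map_add' := fun a b => funext fun i => map_add (ch i) a b
      map_smul' := fun r a => funext fun i => map_smul (ch i) r a
      map_zero' := funext fun i => map_zero (ch i)
      map_mul' := fun a b => funext fun i => (hch i).1 a b }
  have hfapp : ∀ (a : B) (i : Fin s.card), f a i = ch i a := fun a i => rfl
  refine ⟨f, ?_, ?_⟩
  · intro a b hab
    have hzero : f (a - b) = 0 := by rw [map_sub, hab, sub_self]
    have hab' : a - b = 0 := by
      refine hsemi (a - b) fun φ h1 h2 => ?_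
      have hφs : φ ∈ s := (hmem_s φ).2 ⟨h1, h2⟩
      have h6 := congrFun hzero (g.symm ⟨φ, hφs⟩)
      rw [hfapp] at h6
      simpa only [ch, Equiv.apply_symm_apply, Pi.zero_apply] using h6
    exact sub_eq_zero.mp hab'
  · intro c
    refine ⟨∑ i : Fin s.card, c i • e (ch i), ?_⟩
    funext j
    rw [hfapp, map_sum, Finset.sum_eq_single j]
    · rw [map_smul, he1 _ (hch j), smul_eq_mul, mul_one]
    · intro i _ hij
      rw [map_smul, horth _ (hch i) _ (hch j)
        (fun hh => hij (g.injective (Subtype.ext hh.symm))), smul_zero]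
    · intro hj; exact absurd (Finset.mem_univ j) hj

/-- A commutative Banach algebra such that `ker φ` has an identity for every nonzero
continuous character `φ` (and, for `φ = 0`, `A` itself has an identity) has finite
maximal ideal space, is semisimple, and is isomorphic as an algebra to `ℂⁿ`. -/
theorem commutative_character_contractible_iso_Cn
    {A : Type*} [NonUnitalNormedCommRing A] [NormedSpace ℂ A]
    [IsScalarTower ℂ A A] [SMulCommClass ℂ A A] [CompleteSpace A]
    (h : ∀ φ : A →L[ℂ] ℂ, (∀ a b, φ (a * b) = φ a * φ b) → φ ≠ 0 →
      ∃ E : A, φ E = 0 ∧ ∀ c : A, φ c = 0 → E * c = c)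
    (h0 : ∃ u : A, ∀ a : A, u * a = a) :
    {φ : A →L[ℂ] ℂ | (∀ a b, φ (a * b) = φ a * φ b) ∧ φ ≠ 0}.Finite ∧
    (∀ a : A, (∀ φ : A →L[ℂ] ℂ, (∀ x y, φ (x * y) = φ x * φ y) → φ ≠ 0 → φ a = 0)
      → a = 0) ∧
    ∃ (n : ℕ) (f : A →ₙₐ[ℂ] (Fin n → ℂ)), Function.Bijective f := by
  obtain ⟨u, hu⟩ := h0
  have hu' : ∀ a : A, a * u = a := fun a => (mul_comm a u).trans (hu a)
  letI ring : CommRing A :=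
    { (inferInstance : NonUnitalCommRing A) with
      one := u, one_mul := hu, mul_one := hu' }
  letI : NormedCommRing A :=
    { ring, (inferInstance : NonUnitalNormedCommRing A) with }
  letI alg : Algebra ℂ A := Algebra.ofModule smul_mul_assoc mul_smul_comm
  letI : NormedAlgebra ℂ A := { alg with norm_smul_le := norm_smul_le }
  exact aux_unital h
end

section
/- Let A be a Banach algebra with identity such that for every nonzero continuous character φ on A, the ideal ker φ has an identity element, and moreover ker φ has an identity when φ = 0 is interpreted as the statement that A has an identity. Then for each nonzero continuous character φ there exist m₁, m₂ ∈ A with φ(m₁) = φ(m₂) = 1, a m₁ = φ(a) m₁, and m₂ a = φ(a) m₂ for all a ∈ A. -/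
open Filter Topology

/-- If `A` is a unital Banach algebra such that for every nonzero continuous character
`φ` the ideal `ker φ` has an identity element, then for each such `φ` there are
`m₁, m₂ ∈ A` with `φ m₁ = φ m₂ = 1`, `a * m₁ = φ a • m₁` and `m₂ * a = φ a • m₂`
for all `a ∈ A`. -/
theorem two_sided_phi_invariant_elements_of_kernel_identities
    {A : Type*} [NormedRing A] [NormedAlgebra ℂ A] [CompleteSpace A]
    (h : ∀ φ : A →L[ℂ] ℂ, (∀ a b, φ (a * b) = φ a * φ b) → φ ≠ 0 →
      ∃ E : A, φ E = 0 ∧ ∀ c : A, φ c = 0 → E * c = c ∧ c * E = c) :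
    ∀ φ : A →L[ℂ] ℂ, (∀ a b, φ (a * b) = φ a * φ b) → φ ≠ 0 →
      ∃ m₁ m₂ : A, φ m₁ = 1 ∧ φ m₂ = 1 ∧
        (∀ a : A, a * m₁ = φ a • m₁) ∧ (∀ a : A, m₂ * a = φ a • m₂) := by
  intro φ hmul hφ
  obtain ⟨E, hE0, hE⟩ := h φ hmul hφ
  -- find u₀ with φ u₀ = 1
  obtain ⟨u, hu⟩ : ∃ u : A, φ u ≠ 0 := by
    by_contra hc
    push_neg at hc
    exact hφ (by ext a; simpa using hc a)
  set u₀ : A := (φ u)⁻¹ • u with hu₀def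
  have hu₀ : φ u₀ = 1 := by
    simp [hu₀def, inv_mul_cancel₀ hu]
  refine ⟨u₀ - E * u₀, u₀ - u₀ * E, ?_, ?_, ?_, ?_⟩
  · simp [map_sub, hmul, hE0, hu₀]
  · simp [map_sub, hmul, hE0, hu₀]
  · intro a
    have hc : φ (a - φ a • 1) = 0 := by
      have h1 : φ (1 : A) = 1 := by
        have h' := hmul u 1
        simp only [mul_one] at h'
        exact (mul_left_cancel₀ hu (by rw [← h', mul_one])).symm
      simp [map_sub, h1]
    have key : (a - φ a • 1) * (u₀ - E * u₀) = 0 := by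
      have h2 : φ ((a - φ a • 1) * u₀) = 0 := by
        rw [hmul, hc, zero_mul]
      have h3 := (hE _ h2).1
      have h4 := (hE _ hc).2
      calc (a - φ a • 1) * (u₀ - E * u₀)
          = (a - φ a • 1) * u₀ - ((a - φ a • 1) * E) * u₀ := by
            rw [mul_sub, mul_assoc]
        _ = (a - φ a • 1) * u₀ - (a - φ a • 1) * u₀ := by rw [h4]
        _ = 0 := sub_self _
    have expand : a * (u₀ - E * u₀)
        = (a - φ a • 1) * (u₀ - E * u₀) + φ a • (u₀ - E * u₀) := by
      simp [sub_mul, smul_mul_assoc]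
    rw [expand, key, zero_add]
  · intro a
    have hc : φ (a - φ a • 1) = 0 := by
      have h1 : φ (1 : A) = 1 := by
        have h' := hmul u 1
        simp only [mul_one] at h'
        exact (mul_left_cancel₀ hu (by rw [← h', mul_one])).symm
      simp [map_sub, h1]
    have key : (u₀ - u₀ * E) * (a - φ a • 1) = 0 := by
      have h3 := (hE _ hc).1
      calc (u₀ - u₀ * E) * (a - φ a • 1)
          = u₀ * (a - φ a • 1) - u₀ * (E * (a - φ a • 1)) := by
            rw [sub_mul, mul_assoc]
        _ = u₀ * (a - φ a • 1) - u₀ * (a - φ a • 1) := by rw [h3]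
        _ = 0 := sub_self _
    have expand : (u₀ - u₀ * E) * a
        = (u₀ - u₀ * E) * (a - φ a • 1) + φ a • (u₀ - u₀ * E) := by
      simp [mul_sub, mul_smul_comm]
    rw [expand, key, zero_add]
end
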